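/- Let Q : (α → β) → Prop-style specification be given by a predicate Q : α × β → Prop. Suppose t₁, ..., tₚ : α → β are functions such that there is NO a : α with ¬Q(a, t₁(a)) ∧ ⋯ ∧ ¬Q(a, tₚ(a)) (i.e., the set of 'counterexample instances' is jointly unsatisfiable). Then the function f defined by f(a) = tₚ(a) if Q(a, tₚ(a)), else tₚ₋₁(a) if Q(a, tₚ₋₁(a)), ..., else t₁(a) (a nested if-then-else with final default t₁) satisfies ∀ a, Q(a, f(a)). -/

import Mathlib

variable {α β : Type*}

/-- The nested if-then-else cascade: try candidates in list order,
defaulting to `t₁` if none of them satisfies `Q`. -/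
def cascade (Q : α → β → Prop) [∀ a b, Decidable (Q a b)]
    (t₁ : α → β) : List (α → β) → α → β
  | [], a => t₁ a
  | t :: rest, a => if Q a (t a) then t a else cascade Q t₁ rest a

theorem cascade_of_exists (Q : α → β → Prop) [∀ a b, Decidable (Q a b)]
    (t₁ : α → β) (rest : List (α → β)) (a : α)
    (h : Q a (t₁ a) ∨ ∃ t ∈ rest, Q a (t a)) :
    Q a (cascade Q t₁ rest a) := by
  induction rest with
  | nil => exact h.resolve_right (by simp)
  | cons u us ih =>
    rw [cascade]
    split_ifs with hu
    · exact hu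
    · exact ih (h.imp_right fun hex => (List.or_exists_of_exists_mem_cons hex).resolve_left hu)

theorem stmt_0 (Q : α → β → Prop) [∀ a b, Decidable (Q a b)]
    (t₁ : α → β) (rest : List (α → β))
    (hunsat : ¬ ∃ a : α, ¬ Q a (t₁ a) ∧ ∀ t ∈ rest, ¬ Q a (t a)) :
    ∀ a : α, Q a (cascade Q t₁ rest a) := by
  intro a
  apply cascade_of_exists
  by_contra h
  push Not at h
  exact hunsat ⟨a, h⟩
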